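/- The conditional expectation of X, under P, given that X lies in the union J_2 ∪ (J_{12} ∪ J_{42}) ∪ (J_{112} ∪ J_{142} ∪ J_{412} ∪ J_{442}) ∪ ⋯ (the part of the Sierpiński carpet strictly below the diagonal x_2 = x_1) equals (7/10, 3/10). -/

import Mathlib

/-!
Self-similarity gives `P A = ¼ ∑ᵢ P (Sᵢ⁻¹ A)`, and `P` lives on the unit square `K`, since
`P (cthickening r K) ≤ P (cthickening (r/3) K)` forces all mass of the thickenings onto `K`.
The region `U` below the diagonal satisfies `U = S 1 '' K ∪ S 0 '' U ∪ S 3 '' U`, and the four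
cells `S i '' K` are disjoint, so modulo `P`-null sets `S 0⁻¹ U = S 3⁻¹ U = U`, `S 1⁻¹ U` is
everything and `S 2⁻¹ U` is empty. Hence `P U = ¼ (2 P U + 1) = 1/2`. As `S i x = x/3 + S i 0`,
the same identity for `∫_U x dP` is a linear equation in it (involving the mean
`∫ x dP = (1/2, 1/2)`, found the same way), whose solution is `(7/20, 3/20)`.
-/

open MeasureTheory Set
open scoped ENNReal

/-- The four contractive similarities of ratio 1/3 generating the Sierpiński carpet.
`S 0, S 1, S 2, S 3` correspond to `S_1, S_2, S_3, S_4` in the paper. -/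
noncomputable def S (i : Fin 4) (p : ℝ × ℝ) : ℝ × ℝ :=
  (p.1 / 3 + (if i = 1 ∨ i = 3 then (2 : ℝ) / 3 else 0),
   p.2 / 3 + (if i = 2 ∨ i = 3 then (2 : ℝ) / 3 else 0))

/-- Composition `S_{σ_1} ∘ ⋯ ∘ S_{σ_k}` along a word `σ`. -/
noncomputable def Sw (σ : List (Fin 4)) : ℝ × ℝ → ℝ × ℝ :=
  σ.foldr (fun i g => S i ∘ g) id

/-- The unit square `J = [0,1] × [0,1]`. -/
def K : Set (ℝ × ℝ) := Icc (0, 0) (1, 1)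

/-- The basic square `J_σ = S_σ([0,1]²)`. -/
noncomputable def Jw (σ : List (Fin 4)) : Set (ℝ × ℝ) := Sw σ '' K

/-- The self-similarity equation `P = (1/4) ∑_{i=1}^4 P ∘ S_i⁻¹`. -/
def SelfSimilar (P : Measure (ℝ × ℝ)) : Prop :=
  P = (1 / 4 : ℝ≥0∞) • P.map (S 0) + (1 / 4 : ℝ≥0∞) • P.map (S 1)
    + (1 / 4 : ℝ≥0∞) • P.map (S 2) + (1 / 4 : ℝ≥0∞) • P.map (S 3)

/-- Distortion error of a set `α` of points: `∫ min_{a∈α} ‖x−a‖² dP`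
(squared Euclidean distance). -/
noncomputable def distortion (P : Measure (ℝ × ℝ)) (α : Set (ℝ × ℝ)) : ℝ :=
  ∫ x, (⨅ a ∈ α, ((x.1 - a.1) ^ 2 + (x.2 - a.2) ^ 2)) ∂P

/-- The `n`-th quantization error. -/
noncomputable def Vq (P : Measure (ℝ × ℝ)) (n : ℕ) : ℝ :=
  sInf (distortion P '' {α | α.Finite ∧ α.Nonempty ∧ α.ncard ≤ n})

open Filter Topology Metric
open scoped NNReal

section

variable {X ι : Type*} [MeasurableSpace X] [Fintype ι] {S : ι → X → X} {w : ι → ℝ≥0∞}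
  {μ : Measure X}

lemma measure_eq_sum_preimage (hS : ∀ i, Measurable (S i)) (hμ : μ = ∑ i, w i • μ.map (S i))
    {A : Set X} (hA : MeasurableSet A) : μ A = ∑ i, w i * μ (S i ⁻¹' A) := by
  calc μ A = (∑ i, w i • μ.map (S i)) A := by rw [← hμ]
    _ = ∑ i, w i * μ (S i ⁻¹' A) := by
      simp [Measure.coe_finsetSum, Measure.map_apply (hS _) hA]

lemma measureReal_eq_sum_preimage [IsFiniteMeasure μ] (hS : ∀ i, Measurable (S i))
    (hμ : μ = ∑ i, w i • μ.map (S i)) (hw : ∀ i, w i ≠ ∞) {A : Set X} (hA : MeasurableSet A) :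
    μ.real A = ∑ i, (w i).toReal * μ.real (S i ⁻¹' A) := by
  rw [measureReal_def, measure_eq_sum_preimage hS hμ hA,
    ENNReal.toReal_sum fun i _ => ENNReal.mul_ne_top (hw i) (measure_ne_top _ _)]
  simp [ENNReal.toReal_mul, measureReal_def]

lemma setIntegral_eq_sum_preimage {E : Type*} [NormedAddCommGroup E] [NormedSpace ℝ E]
    (hS : ∀ i, Measurable (S i)) (hμ : μ = ∑ i, w i • μ.map (S i))
    {A : Set X} (hA : MeasurableSet A) {f : X → E} (hfm : StronglyMeasurable f)
    (hf : Integrable f μ) :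
    ∫ x in A, f x ∂μ = ∑ i, (w i).toReal • ∫ x in S i ⁻¹' A, f (S i x) ∂μ := by
  have hfi : ∀ i, Integrable f (w i • μ.map (S i)) := by
    rw [hμ] at hf
    exact fun i => integrable_finsetSum_measure.1 hf i (Finset.mem_univ i)
  have hres : (∑ i, w i • μ.map (S i)).restrict A = ∑ i, (w i • μ.map (S i)).restrict A :=
    map_sum (Measure.restrictₗ A) (fun i => w i • μ.map (S i)) Finset.univ
  calc ∫ x in A, f x ∂μ = ∫ x in A, f x ∂(∑ i, w i • μ.map (S i)) := by rw [← hμ]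
    _ = ∑ i, ∫ x in A, f x ∂(w i • μ.map (S i)) :=
      hres ▸ integral_finsetSum_measure fun i _ => (hfi i).restrict
    _ = ∑ i, (w i).toReal • ∫ x in S i ⁻¹' A, f (S i x) ∂μ := by
      refine Finset.sum_congr rfl fun i _ => ?_
      rw [Measure.restrict_smul, integral_smul_measure,
        setIntegral_map hA hfm.aestronglyMeasurable (hS i).aemeasurable]

end

lemma LipschitzWith.cthickening_subset_preimage {X Y : Type*} [PseudoMetricSpace X]
    [PseudoMetricSpace Y] {f : X → Y} {c : ℝ≥0} (hf : LipschitzWith c f) {K : Set X}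
    {L : Set Y} (hK : IsCompact K) (hKL : MapsTo f K L) {r : ℝ} (hr : 0 ≤ r) :
    cthickening r K ⊆ f ⁻¹' cthickening (c * r) L := by
  rw [hK.cthickening_eq_biUnion_closedBall hr]
  simp only [iUnion_subset_iff]
  intro y hy x hx
  refine mem_cthickening_of_dist_le _ (f y) _ _ (hKL hy) ?_
  calc dist (f x) (f y) ≤ c * dist x y := hf.dist_le_mul x y
    _ ≤ c * r := by gcongr; exact mem_closedBall.1 hx

lemma iUnion_cthickening_natCast {X : Type*} [PseudoMetricSpace X] {K : Set X}
    (hK : K.Nonempty) : ⋃ n : ℕ, cthickening n K = univ := by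
  obtain ⟨y, hy⟩ := hK
  refine eq_univ_of_forall fun x => mem_iUnion.2 ?_
  obtain ⟨n, hn⟩ := exists_nat_ge (dist x y)
  exact ⟨n, mem_cthickening_of_dist_le x y n K hy hn⟩

lemma measure_compl_eq_zero_of_contracting {X ι : Type*} [MetricSpace X] [MeasurableSpace X]
    [BorelSpace X] [Fintype ι] {S : ι → X → X} {w : ι → ℝ≥0∞} {μ : Measure X}
    [IsFiniteMeasure μ] (hμ : μ = ∑ i, w i • μ.map (S i)) (hw : ∑ i, w i = 1) {c : ℝ≥0}
    (hc : c < 1) (hS : ∀ i, LipschitzWith c (S i)) {K : Set X} (hK : IsCompact K)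
    (hKne : K.Nonempty) (hSK : ∀ i, MapsTo (S i) K K) : μ Kᶜ = 0 := by
  have hstep : ∀ r, 0 ≤ r → μ (cthickening r K) ≤ μ (cthickening (c * r) K) := by
    intro r hr
    calc μ (cthickening r K) = ∑ i, w i * μ (cthickening r K) := by
          rw [← Finset.sum_mul, hw, one_mul]
      _ ≤ ∑ i, w i * μ (S i ⁻¹' cthickening (c * r) K) := by
          gcongr with i
          exact (hS i).cthickening_subset_preimage hK (hSK i) hr
      _ = μ (cthickening (c * r) K) :=
          (measure_eq_sum_preimage (fun i => (hS i).continuous.measurable) hμ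
            isClosed_cthickening.measurableSet).symm
  have hiter : ∀ n : ℕ, ∀ r, 0 ≤ r → μ (cthickening r K) ≤ μ (cthickening (c ^ n * r) K) := by
    intro n
    induction n with
    | zero => simp
    | succ n ih =>
      intro r hr
      refine (ih r hr).trans ?_
      rw [pow_succ', mul_assoc]
      exact hstep _ (by positivity)
  have hbound : ∀ r, 0 ≤ r → μ (cthickening r K) ≤ μ K := by
    intro r hr
    have hlim : Tendsto (fun n : ℕ => (c : ℝ) ^ n * r) atTop (𝓝 0) := by
      simpa using (tendsto_pow_atTop_nhds_zero_of_lt_one c.2 hc).mul_const r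
    exact ge_of_tendsto
      ((tendsto_measure_cthickening_of_isClosed ⟨1, one_pos, measure_ne_top _ _⟩
        hK.isClosed).comp hlim) (Eventually.of_forall fun n => hiter n r hr)
  have huniv : μ univ ≤ μ K := by
    rw [← iUnion_cthickening_natCast hKne,
      Monotone.measure_iUnion fun m n hmn => cthickening_mono (Nat.cast_le.2 hmn) K]
    exact iSup_le fun n => hbound n n.cast_nonneg
  rw [measure_compl hK.measurableSet (measure_ne_top _ _)]
  exact tsub_eq_zero_of_le huniv

lemma ae_eq_of_inter_eq {X : Type*} [MeasurableSpace X] {μ : Measure X} {K A B : Set X}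
    (hK : μ Kᶜ = 0) (hAB : A ∩ K = B ∩ K) : A =ᵐ[μ] B := by
  have hKuniv : K =ᵐ[μ] (univ : Set X) := ae_eq_univ.2 hK
  exact (inter_ae_eq_left_of_ae_eq_univ hKuniv).symm.trans
    (hAB ▸ inter_ae_eq_left_of_ae_eq_univ hKuniv)

lemma setIntegral_smul_add_const {X E : Type*} [MeasurableSpace X] [NormedAddCommGroup E]
    [NormedSpace ℝ E] [CompleteSpace E] {μ : Measure X} [IsFiniteMeasure μ] {A : Set X} {f : X → E}
    (hf : IntegrableOn f A μ) (a : ℝ) (b : E) :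
    ∫ x in A, (a • f x + b) ∂μ = a • ∫ x in A, f x ∂μ + μ.real A • b := by
  rw [integral_add (f := fun x => a • f x) (hf.smul a) (integrable_const b), integral_smul,
    setIntegral_const]

lemma S_apply_eq_smul_add (i : Fin 4) (p : ℝ × ℝ) : S i p = (3 : ℝ)⁻¹ • p + S i 0 := by
  ext <;> simp [S] <;> ring

lemma lipschitzWith_S (i : Fin 4) : LipschitzWith 3⁻¹ (S i) := by
  refine LipschitzWith.of_dist_le_mul fun p q => ?_
  rw [S_apply_eq_smul_add i p, S_apply_eq_smul_add i q, dist_add_right, dist_smul₀]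
  simp

lemma measurable_S (i : Fin 4) : Measurable (S i) := (lipschitzWith_S i).continuous.measurable

lemma S_injective (i : Fin 4) : Function.Injective (S i) := by
  intro p q h
  rw [S_apply_eq_smul_add i p, S_apply_eq_smul_add i q, add_left_inj] at h
  exact smul_right_injective _ (by norm_num) h

lemma mem_K {p : ℝ × ℝ} : p ∈ K ↔ (0 ≤ p.1 ∧ 0 ≤ p.2) ∧ p.1 ≤ 1 ∧ p.2 ≤ 1 := by
  simp [K, Prod.le_def]

lemma isCompact_K : IsCompact K := isCompact_Icc

lemma mapsTo_S_K (i : Fin 4) : MapsTo (S i) K K := by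
  intro p hp
  rw [mem_K] at hp ⊢
  simp only [S]
  split_ifs <;> refine ⟨⟨?_, ?_⟩, ?_, ?_⟩ <;> linarith

lemma disjoint_S_image_K {i j : Fin 4} (hij : i ≠ j) : Disjoint (S i '' K) (S j '' K) := by
  rw [disjoint_left]
  rintro _ ⟨p, hp, rfl⟩ ⟨q, hq, he⟩
  rw [mem_K] at hp hq
  fin_cases i <;> fin_cases j <;> simp_all [S, Prod.ext_iff] <;> linarith

lemma preimage_S_image_inter_K (i j : Fin 4) {V : Set (ℝ × ℝ)} (hV : V ⊆ K) :
    S i ⁻¹' (S j '' V) ∩ K = if i = j then V else ∅ := by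
  split_ifs with hij
  · rw [hij, (S_injective j).preimage_image, inter_eq_left.2 hV]
  · refine eq_empty_of_forall_notMem fun p ⟨⟨q, hq, he⟩, hp⟩ => ?_
    exact disjoint_left.1 (disjoint_S_image_K hij) ⟨p, hp, rfl⟩ ⟨q, hV hq, he⟩

lemma Jw_nil : Jw [] = K := image_id K

lemma Jw_cons (i : Fin 4) (σ : List (Fin 4)) : Jw (i :: σ) = S i '' Jw σ :=
  image_comp (S i) (Sw σ) K

lemma Jw_subset_K (σ : List (Fin 4)) : Jw σ ⊆ K := by
  induction σ with
  | nil => rw [Jw_nil]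
  | cons i σ ih => rw [Jw_cons]; exact (image_mono ih).trans (mapsTo_S_K i).image_subset

lemma isCompact_Jw (σ : List (Fin 4)) : IsCompact (Jw σ) := by
  induction σ with
  | nil => rw [Jw_nil]; exact isCompact_K
  | cons i σ ih => rw [Jw_cons]; exact ih.image (lipschitzWith_S i).continuous

def belowDiagonal : Set (ℝ × ℝ) :=
  ⋃ τ ∈ {l : List (Fin 4) | ∀ i ∈ l, i = 0 ∨ i = 3}, Jw (τ ++ [1])

lemma measurableSet_belowDiagonal : MeasurableSet belowDiagonal :=
  MeasurableSet.biUnion (to_countable _) fun _ _ => (isCompact_Jw _).measurableSet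

lemma belowDiagonal_subset_K : belowDiagonal ⊆ K :=
  iUnion₂_subset fun _ _ => Jw_subset_K _

lemma belowDiagonal_eq :
    belowDiagonal = S 1 '' K ∪ (S 0 '' belowDiagonal ∪ S 3 '' belowDiagonal) := by
  ext x
  simp only [belowDiagonal, mem_union, mem_iUnion, mem_image, mem_ofPred_eq, exists_prop]
  constructor
  · rintro ⟨_ | ⟨i, τ⟩, hτ, hx⟩
    · exact .inl (by rwa [List.nil_append, Jw_cons, Jw_nil] at hx)
    · rw [List.cons_append, Jw_cons] at hx
      obtain ⟨y, hy, rfl⟩ := hx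
      have hτ' : ∀ j ∈ τ, j = 0 ∨ j = 3 := fun j hj => hτ j (List.mem_cons_of_mem i hj)
      rcases hτ i List.mem_cons_self with rfl | rfl
      · exact .inr (.inl ⟨y, ⟨τ, hτ', hy⟩, rfl⟩)
      · exact .inr (.inr ⟨y, ⟨τ, hτ', hy⟩, rfl⟩)
  · rintro (hx | ⟨y, ⟨τ, hτ, hy⟩, rfl⟩ | ⟨y, ⟨τ, hτ, hy⟩, rfl⟩)
    · exact ⟨[], by simp, by rwa [List.nil_append, Jw_cons, Jw_nil]⟩
    · refine ⟨0 :: τ, by simpa using hτ, ?_⟩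
      rw [List.cons_append, Jw_cons]
      exact mem_image_of_mem _ hy
    · refine ⟨3 :: τ, by simpa using hτ, ?_⟩
      rw [List.cons_append, Jw_cons]
      exact mem_image_of_mem _ hy

lemma preimage_S_belowDiagonal_inter_K (i : Fin 4) :
    S i ⁻¹' belowDiagonal ∩ K = (if i = 1 then K else ∅) ∪
      ((if i = 0 then belowDiagonal else ∅) ∪ (if i = 3 then belowDiagonal else ∅)) := by
  conv_lhs => rw [belowDiagonal_eq]
  simp only [preimage_union, union_inter_distrib_right, preimage_S_image_inter_K _ _ subset_rfl,
    preimage_S_image_inter_K _ _ belowDiagonal_subset_K]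

namespace SelfSimilar

variable {P : Measure (ℝ × ℝ)}

lemma eq_sum (hP : SelfSimilar P) : P = ∑ i, (1 / 4 : ℝ≥0∞) • P.map (S i) := by
  rw [Fin.sum_univ_four]
  exact hP

lemma measure_compl_K [IsFiniteMeasure P] (hP : SelfSimilar P) : P Kᶜ = 0 := by
  refine measure_compl_eq_zero_of_contracting hP.eq_sum ?_ (c := 3⁻¹) (by norm_num) lipschitzWith_S
    isCompact_K ⟨0, by simp [mem_K]⟩ mapsTo_S_K
  rw [Finset.sum_const, Finset.card_univ, Fintype.card_fin, nsmul_eq_mul, Nat.cast_ofNat, one_div,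
    ENNReal.mul_inv_cancel (by norm_num) (by norm_num)]

lemma integrable_id [IsFiniteMeasure P] (hP : SelfSimilar P) : Integrable (fun x => x) P := by
  have hK : ∀ᵐ x ∂P, x ∈ K := mem_ae_iff.2 hP.measure_compl_K
  have := continuous_id.continuousOn.integrableOn_compact (μ := P) isCompact_K
  rwa [IntegrableOn, Measure.restrict_eq_self_of_ae_mem hK] at this

lemma setIntegral_id [IsFiniteMeasure P] (hP : SelfSimilar P) {A : Set (ℝ × ℝ)}
    (hA : MeasurableSet A) :
    ∫ x in A, x ∂P =
      ∑ i, (4 : ℝ)⁻¹ • ((3 : ℝ)⁻¹ • ∫ x in S i ⁻¹' A, x ∂P + P.real (S i ⁻¹' A) • S i 0) := by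
  rw [setIntegral_eq_sum_preimage (f := fun x => x) measurable_S hP.eq_sum hA stronglyMeasurable_id
    hP.integrable_id]
  refine Finset.sum_congr rfl fun i _ => ?_
  rw [← setIntegral_smul_add_const hP.integrable_id.integrableOn]
  congr 1
  · norm_num
  · exact integral_congr_ae (ae_of_all _ fun x => S_apply_eq_smul_add i x)

lemma preimage_S_zero_belowDiagonal_ae_eq [IsFiniteMeasure P] (hP : SelfSimilar P) :
    S 0 ⁻¹' belowDiagonal =ᵐ[P] belowDiagonal :=
  ae_eq_of_inter_eq hP.measure_compl_K (by simp [preimage_S_belowDiagonal_inter_K, Fin.ext_iff,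
    belowDiagonal_subset_K])

lemma preimage_S_one_belowDiagonal_ae_eq [IsFiniteMeasure P] (hP : SelfSimilar P) :
    S 1 ⁻¹' belowDiagonal =ᵐ[P] univ :=
  ae_eq_of_inter_eq hP.measure_compl_K (by simp [preimage_S_belowDiagonal_inter_K, Fin.ext_iff])

lemma preimage_S_two_belowDiagonal_ae_eq [IsFiniteMeasure P] (hP : SelfSimilar P) :
    S 2 ⁻¹' belowDiagonal =ᵐ[P] (∅ : Set (ℝ × ℝ)) :=
  ae_eq_of_inter_eq hP.measure_compl_K (by simp [preimage_S_belowDiagonal_inter_K, Fin.ext_iff])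

lemma preimage_S_three_belowDiagonal_ae_eq [IsFiniteMeasure P] (hP : SelfSimilar P) :
    S 3 ⁻¹' belowDiagonal =ᵐ[P] belowDiagonal :=
  ae_eq_of_inter_eq hP.measure_compl_K (by simp [preimage_S_belowDiagonal_inter_K, Fin.ext_iff,
    belowDiagonal_subset_K])

lemma measureReal_belowDiagonal [IsProbabilityMeasure P] (hP : SelfSimilar P) :
    P.real belowDiagonal = 1 / 2 := by
  have h := measureReal_eq_sum_preimage measurable_S hP.eq_sum (fun _ => by norm_num)
    measurableSet_belowDiagonal
  rw [Fin.sum_univ_four, measureReal_congr hP.preimage_S_zero_belowDiagonal_ae_eq,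
    measureReal_congr hP.preimage_S_one_belowDiagonal_ae_eq,
    measureReal_congr hP.preimage_S_two_belowDiagonal_ae_eq,
    measureReal_congr hP.preimage_S_three_belowDiagonal_ae_eq, probReal_univ,
    measureReal_empty] at h
  norm_num at h
  linarith

lemma integral_id [IsProbabilityMeasure P] (hP : SelfSimilar P) :
    ∫ x, x ∂P = ((1 : ℝ) / 2, (1 : ℝ) / 2) := by
  have h := hP.setIntegral_id MeasurableSet.univ
  rw [Measure.restrict_univ, Fin.sum_univ_four] at h
  norm_num [S, Prod.ext_iff, Fin.ext_iff] at h ⊢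
  constructor <;> linarith

lemma setIntegral_belowDiagonal [IsProbabilityMeasure P] (hP : SelfSimilar P) :
    ∫ x in belowDiagonal, x ∂P = ((7 : ℝ) / 20, (3 : ℝ) / 20) := by
  have h := hP.setIntegral_id measurableSet_belowDiagonal
  rw [Fin.sum_univ_four,
    setIntegral_congr_set hP.preimage_S_zero_belowDiagonal_ae_eq,
    measureReal_congr hP.preimage_S_zero_belowDiagonal_ae_eq,
    setIntegral_congr_set hP.preimage_S_one_belowDiagonal_ae_eq,
    measureReal_congr hP.preimage_S_one_belowDiagonal_ae_eq,
    setIntegral_congr_set hP.preimage_S_two_belowDiagonal_ae_eq,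
    measureReal_congr hP.preimage_S_two_belowDiagonal_ae_eq,
    setIntegral_congr_set hP.preimage_S_three_belowDiagonal_ae_eq,
    measureReal_congr hP.preimage_S_three_belowDiagonal_ae_eq,
    Measure.restrict_univ, hP.integral_id, hP.measureReal_belowDiagonal] at h
  norm_num [S, Prod.ext_iff, Fin.ext_iff] at h ⊢
  constructor <;> linarith

end SelfSimilar

/-- The conditional expectation of `X` on the part of the carpet strictly below the
diagonal, `⋃_{k≥0} ⋃_{τ ∈ {1,4}^k} J_{τ2}`, equals `(7/10, 3/10)`.
(Indices: letter `1` is `0`, letter `2` is `1`, letter `4` is `3`.) -/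
theorem stmt_9 (P : Measure (ℝ × ℝ)) [IsProbabilityMeasure P] (hP : SelfSimilar P)
    (U : Set (ℝ × ℝ))
    (hU : U = ⋃ τ ∈ {l : List (Fin 4) | ∀ i ∈ l, i = 0 ∨ i = 3}, Jw (τ ++ [1])) :
    (P U).toReal⁻¹ • ∫ x in U, x ∂P = ((7 : ℝ) / 10, (3 : ℝ) / 10) := by
  obtain rfl : U = belowDiagonal := hU
  rw [← measureReal_def, hP.measureReal_belowDiagonal, hP.setIntegral_belowDiagonal]
  norm_num
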